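/- Let X be a nonempty compact metric space and let A be a stably finite unital C*-algebra. Then rc(A) ≤ rc(C(X, A)), where C(X, A) is the C*-algebra of continuous A-valued functions on X (canonically isomorphic to C(X) ⊗ A). -/

import Mathlib

open Filter Topology
open scoped ENNReal

/-- A positive element of a C*-algebra: one of the form `y* y`. -/
def IsPositiveElem {D : Type*} [Mul D] [Star D] (a : D) : Prop :=
  ∃ y : D, a = star y * y

/-- Cuntz subequivalence in `D`: `a ≾_D b` iff there is a sequence `(cₙ)` in `D` with
`cₙ * b * cₙ* → a`. -/
def CuntzSub {D : Type*} [Mul D] [Star D] [TopologicalSpace D] (a b : D) : Prop :=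
  ∃ c : ℕ → D, Tendsto (fun n => c n * b * star (c n)) atTop (nhds a)

/-- A normalized 2-quasitrace on a unital complex *-algebra `D`: a function `D → ℂ` with
`τ(1) = 1`, `τ(x* x) = τ(x x*) ≥ 0`, linear on every commutative *-subalgebra, bundled
together with extensions to all matrix algebras `Mₙ(D)` having the corresponding quasitrace
properties and normalized so that `τₙ(x ⊗ e₁₁) = τ(x)`. -/
structure Quasitrace (D : Type*) [Ring D] [StarRing D] [Algebra ℂ D] [StarModule ℂ D] where
  toFun : D → ℂ
  matFun : (n : ℕ) → Matrix (Fin n) (Fin n) D → ℂ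
  norm_one : toFun 1 = 1
  tracial : ∀ x : D, toFun (star x * x) = toFun (x * star x)
  nonneg : ∀ x : D, ∃ r : ℝ, 0 ≤ r ∧ toFun (star x * x) = (r : ℂ)
  linear_on_comm : ∀ S : StarSubalgebra ℂ D, (∀ x ∈ S, ∀ y ∈ S, x * y = y * x) →
    (∀ x ∈ S, ∀ y ∈ S, toFun (x + y) = toFun x + toFun y) ∧
    (∀ (c : ℂ), ∀ x ∈ S, toFun (c • x) = c * toFun x)
  mat_tracial : ∀ (n : ℕ) (x : Matrix (Fin n) (Fin n) D),
    matFun n (star x * x) = matFun n (x * star x)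
  mat_nonneg : ∀ (n : ℕ) (x : Matrix (Fin n) (Fin n) D),
    ∃ r : ℝ, 0 ≤ r ∧ matFun n (star x * x) = (r : ℂ)
  mat_linear_on_comm : ∀ (n : ℕ) (S : StarSubalgebra ℂ (Matrix (Fin n) (Fin n) D)),
    (∀ x ∈ S, ∀ y ∈ S, x * y = y * x) →
    (∀ x ∈ S, ∀ y ∈ S, matFun n (x + y) = matFun n x + matFun n y) ∧
    (∀ (c : ℂ), ∀ x ∈ S, matFun n (c • x) = c * matFun n x)
  mat_corner : ∀ (n : ℕ) (x : D),
    matFun (n + 1) (Matrix.of fun i j => if i = 0 ∧ j = 0 then x else 0) = toFun x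

/-- `IsDimValue τ n a L` says that `L = d_τ(a) = lim_k τₙ(a^{1/k})`, where the powers `a^{1/k}`
(given by continuous functional calculus) are encoded as a sequence of positive `k`-th roots
of `a`; such roots are unique in a C*-algebra. -/
def IsDimValue {D : Type*} [Ring D] [StarRing D] [Algebra ℂ D] [StarModule ℂ D]
    (τ : Quasitrace D) (n : ℕ) (a : Matrix (Fin n) (Fin n) D) (L : ℝ) : Prop :=
  ∃ rt : ℕ → Matrix (Fin n) (Fin n) D,
    (∀ k : ℕ, 1 ≤ k → IsPositiveElem (rt k) ∧ rt k ^ k = a) ∧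
    Tendsto (fun k => τ.matFun n (rt k)) atTop (nhds (L : ℂ))

/-- The embedding of `M_m(D)` into `M_N(D)` as the upper-left corner. -/
def cornerEmbed {D : Type*} [Zero D] {m : ℕ} (N : ℕ) (a : Matrix (Fin m) (Fin m) D) :
    Matrix (Fin N) (Fin N) D :=
  Matrix.of fun i j =>
    if h : (i : ℕ) < m ∧ (j : ℕ) < m then a ⟨i, h.1⟩ ⟨j, h.2⟩ else 0

/-- `D` has `r`-comparison if whenever `a ∈ M_m(D)₊`, `b ∈ M_n(D)₊` satisfy
`d_τ(a) + r < d_τ(b)` for every normalized 2-quasitrace `τ` on `D`, then `a ≾ b` in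
`M_{max(m,n)}(D)`. -/
def RComparison (D : Type*) [Ring D] [StarRing D] [Algebra ℂ D] [StarModule ℂ D]
    [TopologicalSpace D] (r : ℝ) : Prop :=
  ∀ (m n : ℕ), 1 ≤ m → 1 ≤ n →
    ∀ (a : Matrix (Fin m) (Fin m) D) (b : Matrix (Fin n) (Fin n) D),
      IsPositiveElem a → IsPositiveElem b →
      (∀ (τ : Quasitrace D) (da db : ℝ),
        IsDimValue τ m a da → IsDimValue τ n b db → da + r < db) →
      CuntzSub (cornerEmbed (max m n) a) (cornerEmbed (max m n) b)

/-- The radius of comparison of `D`: the infimum in `[0, ∞]` of the set of `r ∈ [0, ∞)` such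
that `D` has `r`-comparison (equal to `∞` if this set is empty). -/
noncomputable def radiusCmp (D : Type*) [Ring D] [StarRing D] [Algebra ℂ D] [StarModule ℂ D]
    [TopologicalSpace D] : ℝ≥0∞ :=
  sInf {x : ℝ≥0∞ | ∃ r : ℝ, 0 ≤ r ∧ x = ENNReal.ofReal r ∧ RComparison D r}

/-- A unital *-ring is *finite* if `x* x = 1` implies `x x* = 1`. -/
def IsFiniteStarRing (D : Type*) [Ring D] [StarRing D] : Prop :=
  ∀ x : D, star x * x = 1 → x * star x = 1

/-- A unital *-ring is *stably finite* if every matrix algebra `Mₙ(D)` (`n ≥ 1`) is finite. -/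
def IsStablyFinite (D : Type*) [Ring D] [StarRing D] : Prop :=
  ∀ n : ℕ, 1 ≤ n → IsFiniteStarRing (Matrix (Fin n) (Fin n) D)

/-!
Composing with the constant embedding `A → C(X, A)` pulls quasitraces on `C(X, A)` back to `A`
without changing dimension functions: a positive `k`-th root of a constant matrix-valued function
is constant, because positive `k`-th roots are unique at every point. Hence the trace hypothesis
of `r`-comparison for `a`, `b` over `A` gives the one for their constant images, and evaluating the
resulting Cuntz subequivalence in `C(X, A)` at a point of `X` brings it back to `A`. So every `r`
for which `C(X, A)` has `r`-comparison also works for `A`.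
-/

lemma IsPositiveElem.nonneg {D : Type*} [NonUnitalSemiring D] [PartialOrder D] [StarRing D]
    [StarOrderedRing D] {a : D} (ha : IsPositiveElem a) : 0 ≤ a := by
  obtain ⟨y, rfl⟩ := ha
  exact star_mul_self_nonneg y

lemma IsPositiveElem.map {D E F : Type*} [Mul D] [Star D] [Mul E] [Star E] [FunLike F D E]
    [MulHomClass F D E] [StarHomClass F D E] (f : F) {a : D} (ha : IsPositiveElem a) :
    IsPositiveElem (f a) := by
  obtain ⟨y, rfl⟩ := ha
  exact ⟨f y, by rw [map_mul, map_star]⟩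

lemma CuntzSub.map {D E F : Type*} [Mul D] [Star D] [TopologicalSpace D] [Mul E] [Star E]
    [TopologicalSpace E] [FunLike F D E] [MulHomClass F D E] [StarHomClass F D E] (f : F)
    (hf : Continuous f) {a b : D} (h : CuntzSub a b) : CuntzSub (f a) (f b) := by
  obtain ⟨c, hc⟩ := h
  refine ⟨fun n => f (c n), ?_⟩
  simpa only [Function.comp_def, map_mul, map_star] using (hf.tendsto a).comp hc

lemma CFC.eq_of_pow_eq_pow {A : Type*} [PartialOrder A] [Ring A] [StarRing A]
    [TopologicalSpace A] [StarOrderedRing A] [Algebra ℝ A]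
    [ContinuousFunctionalCalculus ℝ A IsSelfAdjoint] [NonnegSpectrumClass ℝ A]
    [IsSemitopologicalRing A] [T2Space A] {a b : A} (ha : 0 ≤ a) (hb : 0 ≤ b) {k : ℕ}
    (hk : k ≠ 0) (h : a ^ k = b ^ k) : a = b := by
  have root_pow : ∀ c : A, 0 ≤ c → (c ^ k) ^ (k : ℝ)⁻¹ = c := fun c hc => by
    rw [← CFC.rpow_natCast c k, CFC.rpow_rpow_of_exponent_nonneg c _ _ (by positivity)
      (by positivity), mul_inv_cancel₀ (by exact_mod_cast hk), CFC.rpow_one c]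
  rw [← root_pow a ha, ← root_pow b hb, h]

lemma IsPositiveElem.eq_of_pow_eq_pow {D : Type*} [CStarAlgebra D] {a b : D}
    (ha : IsPositiveElem a) (hb : IsPositiveElem b) {k : ℕ} (hk : k ≠ 0) (h : a ^ k = b ^ k) :
    a = b :=
  let := CStarAlgebra.spectralOrder D
  have := CStarAlgebra.spectralOrderedRing D
  CFC.eq_of_pow_eq_pow ha.nonneg hb.nonneg hk h

lemma Matrix.eq_of_isPositiveElem_of_pow_eq_pow {A n : Type*} [CStarAlgebra A] [Fintype n]
    [DecidableEq n] {p q : Matrix n n A} (hp : IsPositiveElem p) (hq : IsPositiveElem q) {k : ℕ}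
    (hk : k ≠ 0) (h : p ^ k = q ^ k) : p = q := by
  let := CStarAlgebra.spectralOrder A
  have := CStarAlgebra.spectralOrderedRing A
  -- `CStarMatrix n n A` is `Matrix n n A` carrying its C⋆-algebra structure.
  exact IsPositiveElem.eq_of_pow_eq_pow (D := CStarMatrix n n A) hp hq hk h

namespace StarAlgHom

variable {R A B : Type*} [CommSemiring R] [Semiring A] [StarRing A] [Algebra R A]
  [Semiring B] [StarRing B] [Algebra R B] {n : Type*} [Fintype n] [DecidableEq n]

def mapMatrix (f : A →⋆ₐ[R] B) : Matrix n n A →⋆ₐ[R] Matrix n n B :=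
  { f.toAlgHom.mapMatrix with
    map_star' M := Matrix.conjTranspose_map (A := M) f (map_star f) }

lemma mapMatrix_apply (f : A →⋆ₐ[R] B) (M : Matrix n n A) : f.mapMatrix M = M.map f :=
  rfl

lemma mapMatrix_cornerEmbed (f : A →⋆ₐ[R] B) {m : ℕ} (N : ℕ) (a : Matrix (Fin m) (Fin m) A) :
    f.mapMatrix (cornerEmbed N a) = cornerEmbed N (f.mapMatrix a) := by
  ext i j
  simp only [mapMatrix_apply, cornerEmbed, Matrix.map_apply, Matrix.of_apply]
  split_ifs <;> simp

end StarAlgHom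

namespace ContinuousMap

variable (R X A : Type*) [CommSemiring R] [TopologicalSpace X] [TopologicalSpace A] [Semiring A]
  [IsTopologicalSemiring A] [StarRing A] [ContinuousStar A] [Algebra R A]

def constStarAlgHom : A →⋆ₐ[R] C(X, A) where
  toFun := const X
  map_one' := rfl
  map_mul' _ _ := rfl
  map_zero' := rfl
  map_add' _ _ := rfl
  commutes' _ := rfl
  map_star' _ := rfl

-- `ContinuousMap.evalStarAlgHom` needs a commutative codomain.
def evalAtStarAlgHom (x : X) : C(X, A) →⋆ₐ[R] A where
  toFun f := f x
  map_one' := rfl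
  map_mul' _ _ := rfl
  map_zero' := rfl
  map_add' _ _ := rfl
  commutes' _ := rfl
  map_star' _ := rfl

variable {X A} {n : Type*} [Fintype n] [DecidableEq n]

@[simp] lemma mapMatrix_evalAtStarAlgHom_mapMatrix_constStarAlgHom (x : X) (a : Matrix n n A) :
    (evalAtStarAlgHom R X A x).mapMatrix ((constStarAlgHom R X A).mapMatrix a) = a :=
  rfl

end ContinuousMap

open ContinuousMap

lemma Matrix.eq_mapMatrix_const_of_pow_eq {X A n : Type*} [TopologicalSpace X] [CStarAlgebra A]
    [Fintype n] [DecidableEq n] (x₀ : X) {r : Matrix n n C(X, A)} (hr : IsPositiveElem r)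
    {k : ℕ} (hk : k ≠ 0) {a : Matrix n n A} (h : r ^ k = (constStarAlgHom ℂ X A).mapMatrix a) :
    r = (constStarAlgHom ℂ X A).mapMatrix ((evalAtStarAlgHom ℂ X A x₀).mapMatrix r) := by
  have eval_eq : ∀ x,
      (evalAtStarAlgHom ℂ X A x).mapMatrix r = (evalAtStarAlgHom ℂ X A x₀).mapMatrix r :=
    fun x => Matrix.eq_of_isPositiveElem_of_pow_eq_pow (hr.map _) (hr.map _) hk <| by
      simp only [← map_pow, h, mapMatrix_evalAtStarAlgHom_mapMatrix_constStarAlgHom]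
  ext i j x
  exact congrFun₂ (eval_eq x) i j

def IsLinearOnCommSubalgebras {E : Type*} [Ring E] [StarRing E] [Algebra ℂ E] [StarModule ℂ E]
    (t : E → ℂ) : Prop :=
  ∀ S : StarSubalgebra ℂ E, (∀ x ∈ S, ∀ y ∈ S, x * y = y * x) →
    (∀ x ∈ S, ∀ y ∈ S, t (x + y) = t x + t y) ∧ (∀ (c : ℂ), ∀ x ∈ S, t (c • x) = c * t x)

lemma IsLinearOnCommSubalgebras.comp {D E : Type*} [Ring D] [StarRing D] [Algebra ℂ D]
    [StarModule ℂ D] [Ring E] [StarRing E] [Algebra ℂ E] [StarModule ℂ E] {t : E → ℂ}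
    (ht : IsLinearOnCommSubalgebras t) (f : D →⋆ₐ[ℂ] E) : IsLinearOnCommSubalgebras (t ∘ f) := by
  intro S hS
  have hS' : ∀ x ∈ S.map f, ∀ y ∈ S.map f, x * y = y * x := by
    rintro _ ⟨x, hx, rfl⟩ _ ⟨y, hy, rfl⟩
    simp only [← map_mul, hS x hx y hy]
  obtain ⟨hadd, hsmul⟩ := ht (S.map f) hS'
  exact ⟨fun x hx y hy => by simpa using hadd _ ⟨x, hx, rfl⟩ _ ⟨y, hy, rfl⟩,
    fun c x hx => by simpa using hsmul c _ ⟨x, hx, rfl⟩⟩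

namespace Quasitrace

variable {D E : Type*} [Ring D] [StarRing D] [Algebra ℂ D] [StarModule ℂ D] [Ring E]
  [StarRing E] [Algebra ℂ E] [StarModule ℂ E]

def comp (τ : Quasitrace E) (f : D →⋆ₐ[ℂ] E) : Quasitrace D where
  toFun := τ.toFun ∘ f
  matFun n := τ.matFun n ∘ f.mapMatrix
  norm_one := by simpa using τ.norm_one
  tracial x := by simpa only [Function.comp_apply, map_mul, map_star] using τ.tracial (f x)
  nonneg x := by simpa only [Function.comp_apply, map_mul, map_star] using τ.nonneg (f x)
  linear_on_comm := IsLinearOnCommSubalgebras.comp (t := τ.toFun) τ.linear_on_comm f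
  mat_tracial n x := by
    simpa only [Function.comp_apply, map_mul, map_star] using τ.mat_tracial n (f.mapMatrix x)
  mat_nonneg n x := by
    simpa only [Function.comp_apply, map_mul, map_star] using τ.mat_nonneg n (f.mapMatrix x)
  mat_linear_on_comm n :=
    IsLinearOnCommSubalgebras.comp (t := τ.matFun n) (τ.mat_linear_on_comm n) f.mapMatrix
  mat_corner n x := by
    rw [Function.comp_apply, Function.comp_apply, ← τ.mat_corner n (f x),
      StarAlgHom.mapMatrix_apply]
    congr 1
    ext i j
    simp [apply_ite f]

end Quasitrace

section ContinuousMap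

variable {X A : Type*} [TopologicalSpace X] [Nonempty X] [CStarAlgebra A]

lemma IsDimValue.of_const {τ : Quasitrace C(X, A)} {m : ℕ} {a : Matrix (Fin m) (Fin m) A} {L : ℝ}
    (h : IsDimValue τ m ((constStarAlgHom ℂ X A).mapMatrix a) L) :
    IsDimValue (τ.comp (constStarAlgHom ℂ X A)) m a L := by
  obtain ⟨x₀⟩ := ‹Nonempty X›
  obtain ⟨rt, hrt, hlim⟩ := h
  refine ⟨fun k => (evalAtStarAlgHom ℂ X A x₀).mapMatrix (rt k),
    fun k hk => ⟨(hrt k hk).1.map _, ?_⟩, hlim.congr' ?_⟩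
  · rw [← map_pow, (hrt k hk).2, mapMatrix_evalAtStarAlgHom_mapMatrix_constStarAlgHom]
  · filter_upwards [eventually_ge_atTop 1] with k hk
    simp only [Quasitrace.comp, Function.comp_apply]
    rw [← Matrix.eq_mapMatrix_const_of_pow_eq x₀ (hrt k hk).1 (by omega) (hrt k hk).2]

lemma RComparison.of_continuousMap {r : ℝ} (h : RComparison C(X, A) r) : RComparison A r := by
  intro m n hm hn a b ha hb hgap
  obtain ⟨x₀⟩ := ‹Nonempty X›
  have hcomp := h m n hm hn _ _ (ha.map (constStarAlgHom ℂ X A).mapMatrix)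
    (hb.map (constStarAlgHom ℂ X A).mapMatrix)
    fun τ da db hda hdb => hgap (τ.comp (constStarAlgHom ℂ X A)) da db hda.of_const hdb.of_const
  have heval := hcomp.map (evalAtStarAlgHom ℂ X A x₀).mapMatrix
    (continuous_id.matrix_map (continuous_eval_const x₀))
  simpa only [StarAlgHom.mapMatrix_cornerEmbed,
    mapMatrix_evalAtStarAlgHom_mapMatrix_constStarAlgHom] using heval

end ContinuousMap

lemma radiusCmp_le_radiusCmp_of_rComparison {D E : Type*} [Ring D] [StarRing D] [Algebra ℂ D]
    [StarModule ℂ D] [TopologicalSpace D] [Ring E] [StarRing E] [Algebra ℂ E] [StarModule ℂ E]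
    [TopologicalSpace E] (h : ∀ r : ℝ, 0 ≤ r → RComparison E r → RComparison D r) :
    radiusCmp D ≤ radiusCmp E :=
  sInf_le_sInf fun _ ⟨r, hr, hx, hE⟩ => ⟨r, hr, hx, h r hr hE⟩

theorem radiusCmp_le_radiusCmp_continuousMap (X : Type*) [MetricSpace X]
    [Nonempty X] (A : Type*) [CStarAlgebra A] :
    radiusCmp A ≤ radiusCmp C(X, A) :=
  radiusCmp_le_radiusCmp_of_rComparison fun _ _ => RComparison.of_continuousMap (X := X)
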